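/- For a positively oriented nondegenerate triangle with circumcenter c and circumradius R, the signed dual (circumcentric) area assigned to the vertex v₁, namely A₁ := (1/4)·[det(v₂−v₁, c−v₁) + det(v₁−v₃, c−v₃)], equals (R²/4)·(sin(2β) + sin(2γ)), where β and γ are the interior angles at v₂ and v₃. -/

import Mathlib

/-!
The quantity `det2 (q - p) (c - p)` is twice the signed area of the triangle `p q c`, which is
isosceles with legs `R` and, by the inscribed angle theorem, apex angle `2 ∠ q r p`; hence it
equals `R² sin (2 ∠ q r p)`. Applied to the edges `v₁v₂` and `v₃v₁` this gives the two terms.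
The identity is checked algebraically: the circumcenter satisfies `2⟪c - p, q - p⟫ = ‖q - p‖²`,
and the circumradius satisfies `4 det2(u, w)² R² = ‖u‖² ‖w‖² ‖u - w‖²`.
-/

noncomputable section

/-- Determinant of two vectors in ℝ². -/
def det2 (a b : EuclideanSpace ℝ (Fin 2)) : ℝ := a 0 * b 1 - a 1 * b 0

open InnerProductGeometry Real
open scoped RealInnerProductSpace

local notation "ℝ²" => EuclideanSpace ℝ (Fin 2)

lemma real_inner_eq_fin_two (x y : ℝ²) : ⟪x, y⟫ = x 0 * y 0 + x 1 * y 1 := by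
  simp [PiLp.inner_apply, Fin.sum_univ_two]; ring

lemma norm_sq_eq_fin_two (x : ℝ²) : ‖x‖ ^ 2 = x 0 ^ 2 + x 1 ^ 2 := by
  rw [← real_inner_self_eq_norm_sq, real_inner_eq_fin_two]; ring

lemma det2_mul_det2 (u x w : ℝ²) :
    det2 u x * det2 u w = ‖u‖ ^ 2 * ⟪x, w⟫ - ⟪u, x⟫ * ⟪u, w⟫ := by
  simp only [det2, norm_sq_eq_fin_two, real_inner_eq_fin_two]; ring

lemma det2_sq_mul_norm_sq (u w x : ℝ²) :
    det2 u w ^ 2 * ‖x‖ ^ 2 = ‖⟪x, u⟫ • w - ⟪x, w⟫ • u‖ ^ 2 := by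
  simp only [det2, norm_sq_eq_fin_two, real_inner_eq_fin_two, PiLp.sub_apply, PiLp.smul_apply,
    smul_eq_mul]; ring

lemma det2_sub_sub_rotate (p q r : ℝ²) :
    det2 (q - p) (r - p) = det2 (p - r) (q - r) := by
  simp only [det2, PiLp.sub_apply]; ring

lemma det2_ne_zero_left {x y : ℝ²} (h : det2 x y ≠ 0) : x ≠ 0 := by
  rintro rfl; simp [det2] at h

lemma det2_ne_zero_right {x y : ℝ²} (h : det2 x y ≠ 0) : y ≠ 0 := by
  rintro rfl; simp [det2] at h

lemma sin_angle_mul_norm_mul_norm_eq_abs_det2 (x y : ℝ²) :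
    sin (angle x y) * (‖x‖ * ‖y‖) = |det2 x y| := by
  have hlagrange := det2_mul_det2 x y y
  rw [real_inner_self_eq_norm_sq] at hlagrange
  rw [sin_angle_mul_norm_mul_norm, real_inner_self_eq_norm_sq, real_inner_self_eq_norm_sq,
    ← hlagrange, ← pow_two, sqrt_sq_eq_abs]

lemma sin_two_mul_angle_mul_sq_norm_mul_sq_norm (x y : ℝ²) :
    sin (2 * angle x y) * (‖x‖ ^ 2 * ‖y‖ ^ 2) = 2 * |det2 x y| * ⟪x, y⟫ := by
  rw [sin_two_mul, ← sin_angle_mul_norm_mul_norm_eq_abs_det2, ← cos_angle_mul_norm_mul_norm]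
  ring

lemma two_mul_inner_eq_norm_sq_of_norm_eq {V : Type*} [NormedAddCommGroup V]
    [InnerProductSpace ℝ V] {c p q : V} (h : ‖c - p‖ = ‖c - q‖) :
    2 * ⟪c - p, q - p⟫ = ‖q - p‖ ^ 2 := by
  have hsq := congrArg (· ^ 2) h
  rw [show c - q = (c - p) - (q - p) by abel, norm_sub_sq_real (c - p)] at hsq
  linarith

lemma four_mul_det2_sq_mul_norm_sq {u w x : ℝ²} (hu : 2 * ⟪x, u⟫ = ‖u‖ ^ 2)
    (hw : 2 * ⟪x, w⟫ = ‖w‖ ^ 2) :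
    4 * det2 u w ^ 2 * ‖x‖ ^ 2 = ‖u‖ ^ 2 * ‖w‖ ^ 2 * ‖u - w‖ ^ 2 := by
  calc 4 * det2 u w ^ 2 * ‖x‖ ^ 2 = ‖(2 * ⟪x, u⟫) • w - (2 * ⟪x, w⟫) • u‖ ^ 2 := by
        rw [mul_assoc, det2_sq_mul_norm_sq, mul_smul, mul_smul, ← smul_sub, norm_smul]
        norm_num; ring
    _ = ‖u‖ ^ 2 * ‖w‖ ^ 2 * ‖u - w‖ ^ 2 := by
        rw [hu, hw, norm_sub_sq_real, norm_sub_sq_real, norm_smul, norm_smul, inner_smul_left,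
          inner_smul_right, real_inner_comm w u]
        simp only [norm_pow, norm_norm, conj_trivial]
        ring

theorem det2_sub_circumcenter_eq {p q r c : ℝ²} (hD : 0 < det2 (q - p) (r - p))
    (hq : ‖c - p‖ = ‖c - q‖) (hr : ‖c - p‖ = ‖c - r‖) :
    det2 (q - p) (c - p) = ‖c - p‖ ^ 2 * sin (2 * EuclideanGeometry.angle q r p) := by
  set u := q - p
  set w := r - p
  set x := c - p
  have hu : 2 * ⟪x, u⟫ = ‖u‖ ^ 2 := two_mul_inner_eq_norm_sq_of_norm_eq hq
  have hw : 2 * ⟪x, w⟫ = ‖w‖ ^ 2 := two_mul_inner_eq_norm_sq_of_norm_eq hr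
  have hdet_mul : det2 u x * (2 * det2 u w) = ‖u‖ ^ 2 * (‖w‖ ^ 2 - ⟪u, w⟫) := by
    linear_combination 2 * det2_mul_det2 u x w + ‖u‖ ^ 2 * hw - ⟪u, w⟫ * hu
      - 2 * ⟪u, w⟫ * real_inner_comm x u
  have hcircumradius := four_mul_det2_sq_mul_norm_sq hu hw
  have hdet_swap : det2 (u - w) (-w) = -det2 u w := by
    simp only [det2, PiLp.sub_apply, PiLp.neg_apply]; ring
  have hsin : sin (2 * EuclideanGeometry.angle q r p) * (‖u - w‖ ^ 2 * ‖w‖ ^ 2)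
      = 2 * det2 u w * (‖w‖ ^ 2 - ⟪u, w⟫) := by
    have hqr : q - r = u - w := by simp [u, w]
    have hpr : p - r = -w := by simp [w]
    rw [EuclideanGeometry.angle, vsub_eq_sub, vsub_eq_sub, hqr, hpr, ← norm_neg w,
      sin_two_mul_angle_mul_sq_norm_mul_sq_norm, hdet_swap, abs_neg, abs_of_pos hD,
      inner_neg_right, inner_sub_left, real_inner_self_eq_norm_sq, norm_neg]
    ring
  have hw0 : w ≠ 0 := det2_ne_zero_right hD.ne'
  have huw0 : u - w ≠ 0 := det2_ne_zero_left (by rw [hdet_swap]; exact neg_ne_zero.2 hD.ne')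
  have hne : 4 * det2 u w ^ 2 * (‖u - w‖ ^ 2 * ‖w‖ ^ 2) ≠ 0 := by positivity
  apply mul_right_cancel₀ hne
  linear_combination (2 * det2 u w * ‖u - w‖ ^ 2 * ‖w‖ ^ 2) * hdet_mul
    - sin (2 * EuclideanGeometry.angle q r p) * (‖u - w‖ ^ 2 * ‖w‖ ^ 2) * hcircumradius
    - ‖u‖ ^ 2 * ‖w‖ ^ 2 * ‖u - w‖ ^ 2 * hsin

/-- For a positively oriented nondegenerate triangle with circumcenter `c` and
circumradius `R`, the signed dual (circumcentric) area assigned to the vertex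
`v₁`, namely `A₁ = (1/4)·[det(v₂−v₁, c−v₁) + det(v₁−v₃, c−v₃)]`, equals
`(R²/4)·(sin(2β) + sin(2γ))`, where `β, γ` are the interior angles at `v₂, v₃`. -/
theorem dec_dual_area_eq_trig_formula
    (v₁ v₂ v₃ : EuclideanSpace ℝ (Fin 2))
    (hA : 0 < det2 (v₂ - v₁) (v₃ - v₁))
    (c : EuclideanSpace ℝ (Fin 2))
    (hc₁ : ‖c - v₁‖ = ‖c - v₂‖) (hc₂ : ‖c - v₂‖ = ‖c - v₃‖)
    (R : ℝ) (hR : R = ‖c - v₁‖)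
    (β γ : ℝ)
    (hβ : β = EuclideanGeometry.angle v₁ v₂ v₃)
    (hγ : γ = EuclideanGeometry.angle v₂ v₃ v₁) :
    (1 / 4) * (det2 (v₂ - v₁) (c - v₁) + det2 (v₁ - v₃) (c - v₃))
      = (R ^ 2 / 4) * (Real.sin (2 * β) + Real.sin (2 * γ)) := by
  have hedge₁₂ : det2 (v₂ - v₁) (c - v₁) = R ^ 2 * sin (2 * γ) := by
    rw [hR, hγ]
    exact det2_sub_circumcenter_eq hA hc₁ (hc₁.trans hc₂)
  have hedge₃₁ : det2 (v₁ - v₃) (c - v₃) = R ^ 2 * sin (2 * β) := by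
    rw [hR, hc₁, hc₂, hβ]
    exact det2_sub_circumcenter_eq (by rwa [← det2_sub_sub_rotate]) (hc₁.trans hc₂).symm hc₂.symm
  rw [hedge₁₂, hedge₃₁]
  ring

end
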